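/- Let q ∈ S_{v,m}(U×ℝ^{n+1}) be a homogeneous Volterra symbol of degree m ∈ ℤ with m ≤ −1, and for T > 0 set q^{(T)}(x,ξ,τ) = q(x,ξ,τ−iT). Then for every compact K ⊂ U, all multi-orders α, β ∈ ℕⁿ and every integer k ≥ 0 there is a constant C > 0, independent of T, such that for every T ≥ 1: |∂_x^α ∂_ξ^β ∂_τ^k q^{(T)}(x,ξ,τ)| ≤ C·T^{−1/w}·(1+‖ξ,τ‖)^{m+1−|β|−wk} for all x ∈ K and (ξ,τ) ∈ ℝⁿ × cl C₋. -/

import Mathlib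

noncomputable section

/-- `ℝⁿ` with the Euclidean norm. -/
abbrev En (n : ℕ) : Type := EuclideanSpace ℝ (Fin n)

/-- The total space `ℝⁿ_x × ℝⁿ_ξ × ℂ_τ`. -/
abbrev Pn (n : ℕ) : Type := En n × En n × ℂ

/-- The parabolic pseudo-norm `‖ξ,τ‖ = (|ξ|^w + |τ|)^{1/w}`. -/
def pnorm (n w : ℕ) (ξ : En n) (τ : ℂ) : ℝ :=
  (‖ξ‖ ^ w + ‖τ‖) ^ ((w : ℝ)⁻¹)

/-- Directional (line) derivative along the vector `v`; along the real direction in `τ` this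
is the complex derivative at interior points and the one-sided real derivative at boundary
points. -/
def pd {V : Type*} [NormedAddCommGroup V] [NormedSpace ℝ V] (v : V) (f : V → ℂ) : V → ℂ :=
  fun p => lineDeriv ℝ f p v

/-- The multi-index partial derivative `∂_x^α` in the first (space) variable. -/
def DxP (n : ℕ) (α : Fin n → ℕ) (f : Pn n → ℂ) : Pn n → ℂ :=
  (List.finRange n).foldr
    (fun i g => (pd ((EuclideanSpace.single i (1 : ℝ) : En n), (0 : En n), (0 : ℂ)))^[α i] g) f

/-- The multi-index partial derivative `∂_ξ^β` in the second (covariable) variable. -/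
def DxiP (n : ℕ) (β : Fin n → ℕ) (f : Pn n → ℂ) : Pn n → ℂ :=
  (List.finRange n).foldr
    (fun i g => (pd ((0 : En n), (EuclideanSpace.single i (1 : ℝ) : En n), (0 : ℂ)))^[β i] g) f

/-- The iterated derivative `∂_τ^k`, taken along the real direction in `τ`. -/
def DtP (n : ℕ) (k : ℕ) (f : Pn n → ℂ) : Pn n → ℂ :=
  (pd ((0 : En n), (0 : En n), (1 : ℂ)))^[k] f

/-- `∂_x^α ∂_ξ^β ∂_τ^k`. -/
def DP (n : ℕ) (α β : Fin n → ℕ) (k : ℕ) (f : Pn n → ℂ) : Pn n → ℂ :=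
  DxP n α (DxiP n β (DtP n k f))

/-- The class `S_{v,m'}(U×ℝ^{n+1})` of homogeneous Volterra symbols of degree `m'`:
smooth on `U × ((ℝⁿ × cl C₋) ∖ {0})`, holomorphic in `τ ∈ C₋ = {Im τ < 0}` for fixed `(x,ξ)`,
and (anisotropically) homogeneous of degree `m'`. -/
def HomSym (n w : ℕ) (U : Set (En n)) (m' : ℤ) (q : Pn n → ℂ) : Prop :=
  ContDiffOn ℝ (⊤ : ℕ∞) q {p : Pn n | p.1 ∈ U ∧ p.2.2.im ≤ 0 ∧ p.2 ≠ 0}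
    ∧ (∀ x ∈ U, ∀ ξ : En n,
        DifferentiableOn ℂ (fun τ => q (x, ξ, τ)) {τ : ℂ | τ.im < 0})
    ∧ ∀ x ∈ U, ∀ (ξ : En n) (τ : ℂ), τ.im ≤ 0 → (ξ, τ) ≠ 0 → ∀ l : ℝ, 0 < l →
        q (x, l • ξ, (l ^ w : ℝ) • τ) = (l : ℂ) ^ m' * q (x, ξ, τ)

/-- The class `S^m_{‖v}(U×ℝ^{n+1})` of (non-polyhomogeneous) Volterra symbols of order
`m ∈ ℝ`: smooth on `U × ℝⁿ × cl C₋`, holomorphic in `τ ∈ C₋` for fixed `(x,ξ)`, with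
`|∂_x^α ∂_ξ^β ∂_τ^k q| ≤ C·(1+‖ξ,τ‖)^{m−|β|−wk}` locally uniformly in `x`. -/
def SymV (n w : ℕ) (U : Set (En n)) (m : ℝ) (q : Pn n → ℂ) : Prop :=
  ContDiffOn ℝ (⊤ : ℕ∞) q {p : Pn n | p.1 ∈ U ∧ p.2.2.im ≤ 0}
    ∧ (∀ x ∈ U, ∀ ξ : En n,
        DifferentiableOn ℂ (fun τ => q (x, ξ, τ)) {τ : ℂ | τ.im < 0})
    ∧ ∀ (K : Set (En n)), IsCompact K → K ⊆ U → ∀ (α β : Fin n → ℕ) (k : ℕ),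
        ∃ C > (0 : ℝ), ∀ x ∈ K, ∀ (ξ : En n) (τ : ℂ), τ.im ≤ 0 →
          ‖DP n α β k q (x, ξ, τ)‖
            ≤ C * (1 + pnorm n w ξ τ) ^ (m - (∑ i, (β i : ℝ)) - (w : ℝ) * (k : ℝ))


/-!
The derivatives `∂_x^α ∂_ξ^β ∂_τ^k` commute with the shift `τ ↦ τ - iT`, and they map `q` to a
symbol that is again smooth and homogeneous, of degree `j = m - |β| - wk`, for the dilations
`(ξ, τ) ↦ (lξ, l^w τ)`. Rescaling to the unit sphere of `‖·,·‖` gives `|∂q(x, ξ, z)| ≤ M ‖ξ,z‖^j`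
with `M` the maximum over `K` times that compact sphere. For `z = τ - iT` one has
`‖ξ,z‖ ≥ T^{1/w}` and `2‖ξ,z‖ ≥ 1 + ‖ξ,τ‖`, so, as `j + 1 ≤ 0`, writing
`‖ξ,z‖^j = ‖ξ,z‖⁻¹ ‖ξ,z‖^{j+1}` yields `T^{-1/w} (1 + ‖ξ,τ‖)^{j+1}` up to a constant.
-/

open Filter Topology Set

section LineDerivative

variable {V : Type*} [NormedAddCommGroup V] [NormedSpace ℝ V]

def IsOpenAlong (s : Set V) (v : V) : Prop :=
  ∀ p ∈ s, ∀ᶠ t : ℝ in 𝓝 0, p + t • v ∈ s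

variable {s : Set V} {f : V → ℂ} {p v : V}

theorem hasLineDerivAt_fderivWithin (hf : DifferentiableWithinAt ℝ f s p)
    (hs : ∀ᶠ t : ℝ in 𝓝 0, p + t • v ∈ s) :
    HasLineDerivAt ℝ f (fderivWithin ℝ f s p v) p v :=
  (hf.hasFDerivWithinAt.hasLineDerivWithinAt v).hasLineDerivAt' hs

theorem hasLineDerivAt_pd (hf : DifferentiableWithinAt ℝ f s p)
    (hs : ∀ᶠ t : ℝ in 𝓝 0, p + t • v ∈ s) : HasLineDerivAt ℝ f (pd v f p) p v :=
  (hasLineDerivAt_fderivWithin hf hs).lineDifferentiableAt.hasLineDerivAt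

theorem contDiffOn_pd (hf : ContDiffOn ℝ (⊤ : ℕ∞) f s) (hs : UniqueDiffOn ℝ s)
    (hv : IsOpenAlong s v) : ContDiffOn ℝ (⊤ : ℕ∞) (pd v f) s := by
  have hD : ContDiffOn ℝ (⊤ : ℕ∞) (fun p => fderivWithin ℝ f s p v) s :=
    (hf.fderivWithin hs (by exact_mod_cast le_top)).clm_apply contDiffOn_const
  refine hD.congr fun p hp => ?_
  exact (hasLineDerivAt_fderivWithin ((hf.differentiableOn (by simp)) p hp) (hv p hp)).lineDeriv

theorem commute_pd_comp_add_const (v c : V) :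
    Function.Commute (pd v) (fun (f : V → ℂ) p => f (p + c)) :=
  fun f => funext fun p => by simp only [pd, lineDeriv, add_right_comm p]

end LineDerivative

theorem Function.Commute.foldr_left {ι X : Type*} {D : ι → X → X} {g : X → X}
    (hD : ∀ i, Function.Commute (D i) g) (L : List ι) :
    Function.Commute (fun x => L.foldr D x) g := by
  induction L with
  | nil => exact fun _ => rfl
  | cons i L ih => exact fun x => by simp only [List.foldr_cons, ih x, hD i _]

section Homogeneity

variable {V : Type*} [NormedAddCommGroup V] [NormedSpace ℝ V]

def IsSmoothHomogeneousOn (A : ℝ → V →ₗ[ℝ] V) (s : Set V) (j : ℤ) (f : V → ℂ) : Prop :=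
  ContDiffOn ℝ (⊤ : ℕ∞) f s ∧ ∀ l : ℝ, 0 < l → ∀ p ∈ s, f (A l p) = (l : ℂ) ^ j * f p

variable {A : ℝ → V →ₗ[ℝ] V} {s : Set V} {j : ℤ} {f : V → ℂ}
  (hs : UniqueDiffOn ℝ s) (hA : ∀ l : ℝ, 0 < l → MapsTo (A l) s s)
include hs hA

theorem isSmoothHomogeneousOn_pd (hf : IsSmoothHomogeneousOn A s j f) {v : V} {d : ℕ}
    (hv : IsOpenAlong s v) (hAv : ∀ l : ℝ, 0 < l → A l v = l ^ d • v) :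
    IsSmoothHomogeneousOn A s (j - d) (pd v f) := by
  refine ⟨contDiffOn_pd hf.1 hs hv, fun l hl p hp => ?_⟩
  have hdiff : DifferentiableOn ℝ f s := hf.1.differentiableOn (by simp)
  have hAp : A l p ∈ s := hA l hl hp
  have hline : (fun t : ℝ => f (A l p + t • (l ^ d : ℝ) • v))
      =ᶠ[𝓝 0] fun t => (l : ℂ) ^ j * f (p + t • v) := by
    filter_upwards [hv p hp] with t ht
    rw [← hAv l hl, ← map_smul, ← map_add, hf.2 l hl _ ht]
  have hdil : HasLineDerivAt ℝ f ((l ^ d : ℝ) • pd v f (A l p)) (A l p) ((l ^ d : ℝ) • v) :=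
    (hasLineDerivAt_pd (hdiff _ hAp) (hv _ hAp)).smul (l ^ d : ℝ)
  have key : (l : ℂ) ^ d * pd v f (A l p) = (l : ℂ) ^ j * pd v f p := by
    have := (HasDerivAt.congr_of_eventuallyEq hdil hline.symm).unique
      ((hasLineDerivAt_pd (hdiff p hp) (hv p hp)).const_mul ((l : ℂ) ^ j))
    rwa [Complex.real_smul, Complex.ofReal_pow] at this
  have hl0 : (l : ℂ) ≠ 0 := Complex.ofReal_ne_zero.2 hl.ne'
  rw [zpow_sub₀ hl0, zpow_natCast, div_mul_eq_mul_div, eq_div_iff (pow_ne_zero _ hl0), ← key]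
  ring

theorem isSmoothHomogeneousOn_iterate_pd (hf : IsSmoothHomogeneousOn A s j f) {v : V} {d : ℕ}
    (hv : IsOpenAlong s v) (hAv : ∀ l : ℝ, 0 < l → A l v = l ^ d • v) (k : ℕ) :
    IsSmoothHomogeneousOn A s (j - d * k) ((pd v)^[k] f) := by
  induction k with
  | zero => simpa using hf
  | succ k ih =>
    rw [Function.iterate_succ_apply']
    convert isSmoothHomogeneousOn_pd hs hA ih hv hAv using 1
    push_cast
    ring

theorem isSmoothHomogeneousOn_foldr_iterate_pd (hf : IsSmoothHomogeneousOn A s j f) {ι : Type*}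
    {e : ι → V} {d : ι → ℕ} (hv : ∀ i, IsOpenAlong s (e i))
    (hAv : ∀ i, ∀ l : ℝ, 0 < l → A l (e i) = l ^ d i • e i) (γ : ι → ℕ) (L : List ι) :
    IsSmoothHomogeneousOn A s (j - (L.map fun i => (d i * γ i : ℤ)).sum)
      (L.foldr (fun i g => (pd (e i))^[γ i] g) f) := by
  induction L with
  | nil => simpa using hf
  | cons i L ih =>
    rw [List.foldr_cons]
    convert isSmoothHomogeneousOn_iterate_pd hs hA ih (hv i) (hAv i) (γ i) using 1
    simp only [List.map_cons, List.sum_cons]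
    ring

end Homogeneity

section Symbols

variable {n w : ℕ} {U : Set (En n)}

def dilation (n w : ℕ) (l : ℝ) : Pn n →ₗ[ℝ] Pn n :=
  LinearMap.prodMap LinearMap.id (LinearMap.prodMap (l • LinearMap.id) ((l ^ w) • LinearMap.id))

theorem dilation_apply (l : ℝ) (p : Pn n) :
    dilation n w l p = (p.1, l • p.2.1, (l ^ w : ℝ) • p.2.2) :=
  rfl

def symbolDomain (n : ℕ) (U : Set (En n)) : Set (Pn n) :=
  {p | p.1 ∈ U ∧ p.2.2.im ≤ 0 ∧ p.2 ≠ 0}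

theorem uniqueDiffOn_symbolDomain (hU : IsOpen U) : UniqueDiffOn ℝ (symbolDomain n U) := by
  have hC : UniqueDiffOn ℝ {c : ℂ | c.im ≤ 0} :=
    uniqueDiffOn_convex (convex_halfSpace_im_le 0) ⟨-Complex.I, by simp⟩
  have hO : IsOpen {p : Pn n | p.1 ∈ U ∧ p.2 ≠ 0} :=
    (hU.preimage continuous_fst).inter (isOpen_compl_singleton.preimage continuous_snd)
  have hdom :
      symbolDomain n U = univ ×ˢ univ ×ˢ {c : ℂ | c.im ≤ 0} ∩ {p | p.1 ∈ U ∧ p.2 ≠ 0} := by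
    ext p
    simp only [symbolDomain, mem_ofPred_eq, mem_inter_iff, mem_prod, mem_univ, true_and]
    tauto
  rw [hdom]
  exact (uniqueDiffOn_univ.prod (uniqueDiffOn_univ.prod hC)).inter hO

theorem isOpenAlong_symbolDomain (hU : IsOpen U) {v : Pn n} (hv : v.2.2.im = 0) :
    IsOpenAlong (symbolDomain n U) v := by
  rintro p ⟨hpU, hpim, hp0⟩
  have hline : Tendsto (fun t : ℝ => p + t • v) (𝓝 0) (𝓝 p) :=
    Continuous.tendsto' (by fun_prop) 0 p (by simp)
  filter_upwards [hline.eventually ((hU.preimage continuous_fst).mem_nhds hpU),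
    hline.eventually ((isOpen_compl_singleton.preimage continuous_snd).mem_nhds hp0)]
    with t htU ht0
  exact ⟨htU, by simpa [hv] using hpim, ht0⟩

theorem mapsTo_dilation_symbolDomain {l : ℝ} (hl : 0 < l) :
    MapsTo (dilation n w l) (symbolDomain n U) (symbolDomain n U) := by
  rintro ⟨x, ξ, τ⟩ ⟨hx, hτ, h0⟩
  refine ⟨hx, ?_, ?_⟩
  · simp only [dilation_apply, Complex.smul_im]
    exact mul_nonpos_of_nonneg_of_nonpos (by positivity) hτ
  · simpa [dilation_apply, hl.ne', Prod.ext_iff] using h0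

theorem HomSym.isSmoothHomogeneousOn {m : ℤ} {q : Pn n → ℂ} (hq : HomSym n w U m q) :
    IsSmoothHomogeneousOn (dilation n w) (symbolDomain n U) m q :=
  ⟨hq.1, fun l hl p hp => hq.2.2 p.1 hp.1 p.2.1 p.2.2 hp.2.1 hp.2.2 l hl⟩

theorem HomSym.isSmoothHomogeneousOn_DP (hU : IsOpen U) {m : ℤ} {q : Pn n → ℂ}
    (hq : HomSym n w U m q) (α β : Fin n → ℕ) (k : ℕ) :
    IsSmoothHomogeneousOn (dilation n w) (symbolDomain n U)
      (m - ∑ i, (β i : ℤ) - w * k) (DP n α β k q) := by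
  have hs := uniqueDiffOn_symbolDomain (n := n) hU
  have hA : ∀ l : ℝ, 0 < l → MapsTo (dilation n w l) (symbolDomain n U) (symbolDomain n U) :=
    fun l hl => mapsTo_dilation_symbolDomain hl
  have hv : ∀ v : Pn n, v.2.2.im = 0 → IsOpenAlong (symbolDomain n U) v :=
    fun v hv => isOpenAlong_symbolDomain hU hv
  have hDt := isSmoothHomogeneousOn_iterate_pd hs hA hq.isSmoothHomogeneousOn (d := w)
    (v := (0, 0, 1)) (hv _ Complex.one_im) (fun l _ => by simp [dilation_apply]) k
  have hDxi := isSmoothHomogeneousOn_foldr_iterate_pd hs hA hDt (d := fun _ => 1)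
    (e := fun i => (0, EuclideanSpace.single i 1, 0)) (fun i => hv _ Complex.zero_im)
    (fun i l _ => by simp [dilation_apply]) β (List.finRange n)
  have hDx := isSmoothHomogeneousOn_foldr_iterate_pd hs hA hDxi (d := fun _ => 0)
    (e := fun i => (EuclideanSpace.single i 1, 0, 0)) (fun i => hv _ Complex.zero_im)
    (fun i l _ => by simp [dilation_apply]) α (List.finRange n)
  convert hDx using 1
  · simp only [Nat.cast_one, one_mul, ← Fin.sum_univ_def, CharP.cast_eq_zero, zero_mul,
      List.map_const', List.length_finRange, List.sum_replicate, nsmul_zero, sub_zero]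
    ring
  · rfl

theorem DP_comp_add_const (α β : Fin n → ℕ) (k : ℕ) (c : Pn n) (f : Pn n → ℂ) :
    DP n α β k (fun p => f (p + c)) = fun p => DP n α β k f (p + c) := by
  have hpd : ∀ (v : Pn n) (j : ℕ),
      Function.Commute (pd v)^[j] (fun (g : Pn n → ℂ) p => g (p + c)) :=
    fun v j => (commute_pd_comp_add_const v c).iterate_left j
  simp only [DP, DxP, DxiP, DtP, hpd _ _ f, Function.Commute.foldr_left (fun i => hpd _ _) _ _]

theorem DP_comp_sub_I_mul (α β : Fin n → ℕ) (k : ℕ) (f : Pn n → ℂ) (T : ℝ) (x ξ : En n) (τ : ℂ) :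
    DP n α β k (fun p => f (p.1, p.2.1, p.2.2 - Complex.I * T)) (x, ξ, τ)
      = DP n α β k f (x, ξ, τ - Complex.I * T) := by
  have hshift : (fun p : Pn n => f (p.1, p.2.1, p.2.2 - Complex.I * T))
      = fun p => f (p + (0, 0, -(Complex.I * T))) := by
    funext ⟨x, ξ, τ⟩
    simp only [Prod.mk_add_mk, add_zero, sub_eq_add_neg]
  rw [hshift, DP_comp_add_const]
  simp only [Prod.mk_add_mk, add_zero, sub_eq_add_neg]

end Symbols

section ParabolicNorm

variable {n w : ℕ}

theorem pnorm_nonneg (ξ : En n) (τ : ℂ) : 0 ≤ pnorm n w ξ τ :=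
  Real.rpow_nonneg (by positivity) _

theorem pnorm_pow (hw : w ≠ 0) (ξ : En n) (τ : ℂ) : pnorm n w ξ τ ^ w = ‖ξ‖ ^ w + ‖τ‖ :=
  Real.rpow_inv_natCast_pow (by positivity) hw

theorem pnorm_smul (hw : w ≠ 0) {l : ℝ} (hl : 0 ≤ l) (ξ : En n) (τ : ℂ) :
    pnorm n w (l • ξ) ((l ^ w : ℝ) • τ) = l * pnorm n w ξ τ := by
  have hsum : ‖l • ξ‖ ^ w + ‖(l ^ w : ℝ) • τ‖ = (l * pnorm n w ξ τ) ^ w := by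
    rw [mul_pow, pnorm_pow hw, norm_smul, norm_smul, mul_pow, Real.norm_of_nonneg hl,
      Real.norm_of_nonneg (by positivity), mul_add]
  rw [pnorm, hsum, Real.pow_rpow_inv_natCast (mul_nonneg hl (pnorm_nonneg ξ τ)) hw]

theorem pnorm_le_pnorm {ξ : En n} {τ τ' : ℂ} (h : ‖τ‖ ≤ ‖τ'‖) :
    pnorm n w ξ τ ≤ pnorm n w ξ τ' :=
  Real.rpow_le_rpow (by positivity) (by linarith) (by positivity)

theorem rpow_inv_le_pnorm {ξ : En n} {τ : ℂ} {T : ℝ} (hT : 0 ≤ T) (h : T ≤ ‖τ‖) :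
    T ^ (w : ℝ)⁻¹ ≤ pnorm n w ξ τ :=
  Real.rpow_le_rpow hT (by linarith [norm_nonneg ξ, pow_nonneg (norm_nonneg ξ) w]) (by positivity)

def pnormSphere (n w : ℕ) : Set (En n × ℂ) :=
  {y | pnorm n w y.1 y.2 = 1 ∧ y.2.im ≤ 0}

theorem isCompact_pnormSphere (hw : w ≠ 0) : IsCompact (pnormSphere n w) := by
  have hcont : Continuous fun y : En n × ℂ => pnorm n w y.1 y.2 :=
    Continuous.rpow_const (by fun_prop) fun _ => Or.inr (by positivity)
  refine Metric.isCompact_of_isClosed_isBounded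
    ((isClosed_eq hcont continuous_const).inter
      (isClosed_le (Complex.continuous_im.comp continuous_snd) continuous_const))
    ((Metric.isBounded_closedBall (x := 0) (r := 1)).subset fun y hy => ?_)
  have hsum : ‖y.1‖ ^ w + ‖y.2‖ = 1 := by rw [← pnorm_pow hw, hy.1, one_pow]
  have hξ : ‖y.1‖ ^ w ≤ 1 := by linarith [norm_nonneg y.2]
  have hτ : ‖y.2‖ ≤ 1 := by linarith [pow_nonneg (norm_nonneg y.1) w]
  simpa [Prod.norm_def] using ⟨(pow_le_one_iff_of_nonneg (norm_nonneg _) hw).1 hξ, hτ⟩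

theorem ne_zero_of_mem_pnormSphere (hw : w ≠ 0) {y : En n × ℂ} (hy : y ∈ pnormSphere n w) :
    y ≠ 0 := by
  rintro rfl
  simpa [pnormSphere, pnorm, hw] using hy.1

end ParabolicNorm

section Estimates

variable {n w : ℕ}

theorem norm_le_mul_pnorm_zpow (hw : w ≠ 0) {U K : Set (En n)} (hKU : K ⊆ U) {j : ℤ}
    {f : Pn n → ℂ} (hf : IsSmoothHomogeneousOn (dilation n w) (symbolDomain n U) j f) {M : ℝ}
    (hM : ∀ p ∈ K ×ˢ pnormSphere n w, ‖f p‖ ≤ M) {x : En n} (hx : x ∈ K) {ξ : En n} {z : ℂ}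
    (hz : z.im ≤ 0) (hr : 0 < pnorm n w ξ z) :
    ‖f (x, ξ, z)‖ ≤ M * pnorm n w ξ z ^ j := by
  set r := pnorm n w ξ z
  set p := dilation n w r⁻¹ (x, ξ, z)
  have hsphere : p.2 ∈ pnormSphere n w := by
    refine ⟨?_, ?_⟩
    · simp only [p, dilation_apply, pnorm_smul hw (inv_nonneg.2 hr.le), r, inv_mul_cancel₀ hr.ne']
    · simp only [p, dilation_apply, Complex.smul_im]
      exact mul_nonpos_of_nonneg_of_nonpos (by positivity) hz
  have hdom : p ∈ symbolDomain n U := ⟨hKU hx, hsphere.2, ne_zero_of_mem_pnormSphere hw hsphere⟩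
  have hback : dilation n w r p = (x, ξ, z) := by
    simp only [p, dilation_apply, smul_smul, ← mul_pow, mul_inv_cancel₀ hr.ne', one_pow, one_smul]
  calc ‖f (x, ξ, z)‖ = r ^ j * ‖f p‖ := by
        rw [← hback, hf.2 r hr p hdom, norm_mul, norm_zpow, Complex.norm_real,
          Real.norm_of_nonneg hr.le]
    _ ≤ r ^ j * M := mul_le_mul_of_nonneg_left (hM p ⟨hx, hsphere⟩) (by positivity)
    _ = M * r ^ j := mul_comm _ _

theorem exists_norm_le_mul_pnorm_zpow (hw : w ≠ 0) {U K : Set (En n)} (hK : IsCompact K)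
    (hKU : K ⊆ U) {j : ℤ} {f : Pn n → ℂ}
    (hf : IsSmoothHomogeneousOn (dilation n w) (symbolDomain n U) j f) :
    ∃ M > 0, ∀ x ∈ K, ∀ (ξ : En n) (z : ℂ), z.im ≤ 0 → 0 < pnorm n w ξ z →
      ‖f (x, ξ, z)‖ ≤ M * pnorm n w ξ z ^ j := by
  obtain ⟨M, hM⟩ := (hK.prod (isCompact_pnormSphere hw)).exists_bound_of_continuousOn
    (hf.1.continuousOn.mono fun p hp => ⟨hKU hp.1, hp.2.2, ne_zero_of_mem_pnormSphere hw hp.2⟩)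
  refine ⟨max M 1, by positivity, fun x hx ξ z hz hr => ?_⟩
  exact (norm_le_mul_pnorm_zpow hw hKU hf hM hx hz hr).trans
    (mul_le_mul_of_nonneg_right (le_max_left _ _) (by positivity))

theorem im_sub_I_mul_ofReal (τ : ℂ) (T : ℝ) : (τ - Complex.I * T).im = τ.im - T := by
  simp

theorem norm_le_norm_sub_I_mul {τ : ℂ} (hτ : τ.im ≤ 0) {T : ℝ} (hT : 0 ≤ T) :
    ‖τ‖ ≤ ‖τ - Complex.I * T‖ := by
  rw [← sq_le_sq₀ (norm_nonneg _) (norm_nonneg _), Complex.sq_norm, Complex.sq_norm,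
    Complex.normSq_apply, Complex.normSq_apply]
  simp only [Complex.sub_re, Complex.sub_im, Complex.mul_re, Complex.mul_im, Complex.I_re,
    Complex.I_im, Complex.ofReal_re, Complex.ofReal_im]
  nlinarith

theorem le_norm_sub_I_mul {τ : ℂ} (hτ : τ.im ≤ 0) (T : ℝ) : T ≤ ‖τ - Complex.I * T‖ := by
  have h := Complex.abs_im_le_norm (τ - Complex.I * T)
  rw [im_sub_I_mul_ofReal] at h
  linarith [neg_le_abs (τ.im - T)]

theorem rpow_inv_le_pnorm_sub_I_mul (ξ : En n) {τ : ℂ} (hτ : τ.im ≤ 0) {T : ℝ} (hT : 0 ≤ T) :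
    T ^ (w : ℝ)⁻¹ ≤ pnorm n w ξ (τ - Complex.I * T) :=
  rpow_inv_le_pnorm hT (le_norm_sub_I_mul hτ T)

theorem one_add_pnorm_le_two_mul_pnorm_sub_I_mul (ξ : En n) {τ : ℂ} (hτ : τ.im ≤ 0) {T : ℝ}
    (hT : 1 ≤ T) : 1 + pnorm n w ξ τ ≤ 2 * pnorm n w ξ (τ - Complex.I * T) := by
  have h1 : 1 ≤ pnorm n w ξ (τ - Complex.I * T) :=
    (Real.one_le_rpow hT (by positivity)).trans (rpow_inv_le_pnorm_sub_I_mul ξ hτ (by linarith))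
  linarith [pnorm_le_pnorm (w := w) (ξ := ξ) (norm_le_norm_sub_I_mul hτ (by linarith : 0 ≤ T))]

theorem zpow_le_rpow_neg_inv_mul_zpow {T r a : ℝ} {j : ℤ} (hj : j + 1 ≤ 0) (hT : 0 < T)
    (hTr : T ^ (w : ℝ)⁻¹ ≤ r) (ha : 0 < a) (har : a ≤ r) :
    r ^ j ≤ T ^ (-(w : ℝ)⁻¹) * a ^ (j + 1) := by
  have hr : 0 < r := ha.trans_le har
  have hinv : r⁻¹ ≤ T ^ (-(w : ℝ)⁻¹) := by
    rw [Real.rpow_neg hT.le]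
    exact inv_anti₀ (by positivity) hTr
  have hpow : r ^ (j + 1) ≤ a ^ (j + 1) := by
    rw [← neg_neg (j + 1), ← inv_zpow', ← inv_zpow' a]
    exact zpow_le_zpow_left₀ (by omega) (by positivity) (inv_anti₀ ha har)
  calc r ^ j = r⁻¹ * r ^ (j + 1) := by rw [zpow_add_one₀ hr.ne']; field_simp
    _ ≤ T ^ (-(w : ℝ)⁻¹) * a ^ (j + 1) := mul_le_mul hinv hpow (by positivity) (by positivity)

end Estimates

theorem stmt15_general (n w : ℕ) (hw2 : 2 ≤ w)
    (U : Set (En n)) (hU : IsOpen U) (m : ℤ) (hm : m ≤ -1)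
    (q : Pn n → ℂ) (hq : HomSym n w U m q)
    (K : Set (En n)) (hK : IsCompact K) (hKU : K ⊆ U)
    (α β : Fin n → ℕ) (k : ℕ) :
    ∃ C > (0 : ℝ), ∀ T : ℝ, 1 ≤ T → ∀ x ∈ K, ∀ (ξ : En n) (τ : ℂ), τ.im ≤ 0 →
      ‖(DP n α β k (fun p => q (p.1, p.2.1, p.2.2 - Complex.I * T)) (x, ξ, τ))‖
        ≤ C * T ^ (-(w : ℝ)⁻¹)
            * (1 + pnorm n w ξ τ) ^ (m + 1 - (∑ i, (β i : ℤ)) - (w : ℤ) * (k : ℤ)) := by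
  have hw : w ≠ 0 := by omega
  set j := m - ∑ i, (β i : ℤ) - w * k
  have hj : j + 1 ≤ 0 := by
    have : 0 ≤ ∑ i, (β i : ℤ) := Finset.sum_nonneg fun i _ => Int.natCast_nonneg _
    have : (0 : ℤ) ≤ w * k := by positivity
    omega
  obtain ⟨M, hM0, hM⟩ :=
    exists_norm_le_mul_pnorm_zpow hw hK hKU (hq.isSmoothHomogeneousOn_DP hU α β k)
  refine ⟨M / 2 ^ (j + 1), by positivity, fun T hT x hx ξ τ hτ => ?_⟩
  have hTr := rpow_inv_le_pnorm_sub_I_mul (w := w) ξ hτ (by linarith : 0 ≤ T)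
  have hz : (τ - Complex.I * T).im ≤ 0 := by rw [im_sub_I_mul_ofReal]; linarith
  rw [DP_comp_sub_I_mul]
  calc _ ≤ M * pnorm n w ξ (τ - Complex.I * T) ^ j :=
        hM x hx ξ _ hz ((Real.rpow_pos_of_pos (by linarith) _).trans_le hTr)
    _ ≤ M * (T ^ (-(w : ℝ)⁻¹) * ((1 + pnorm n w ξ τ) / 2) ^ (j + 1)) := by
        gcongr
        exact zpow_le_rpow_neg_inv_mul_zpow hj (by linarith) hTr
          (by positivity [pnorm_nonneg (w := w) ξ τ])
          (by linarith [one_add_pnorm_le_two_mul_pnorm_sub_I_mul (w := w) ξ hτ hT])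
    _ = _ := by
        rw [div_zpow, show m + 1 - ∑ i, (β i : ℤ) - w * k = j + 1 by ring]
        ring

/-- Homogeneous-symbol version of Mikayelyan's lemma: if `q ∈ S_{v,m}(U×ℝ^{n+1})` with
`m ≤ −1` and `q^{(T)}(x,ξ,τ) = q(x,ξ,τ−iT)`, then for every compact `K ⊂ U`, `α`, `β`, `k`
there is `C > 0`, independent of `T`, such that for every `T ≥ 1`:
`|∂_x^α ∂_ξ^β ∂_τ^k q^{(T)}(x,ξ,τ)| ≤ C·T^{−1/w}·(1+‖ξ,τ‖)^{m+1−|β|−wk}` for `x ∈ K` and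
`(ξ,τ) ∈ ℝⁿ × cl C₋`. -/
theorem stmt15 (n w : ℕ) (hn : 1 ≤ n) (hw : Even w) (hw2 : 2 ≤ w)
    (U : Set (En n)) (hU : IsOpen U) (m : ℤ) (hm : m ≤ -1)
    (q : Pn n → ℂ) (hq : HomSym n w U m q)
    (K : Set (En n)) (hK : IsCompact K) (hKU : K ⊆ U)
    (α β : Fin n → ℕ) (k : ℕ) :
    ∃ C > (0 : ℝ), ∀ T : ℝ, 1 ≤ T → ∀ x ∈ K, ∀ (ξ : En n) (τ : ℂ), τ.im ≤ 0 →
      ‖(DP n α β k (fun p => q (p.1, p.2.1, p.2.2 - Complex.I * T)) (x, ξ, τ))‖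
        ≤ C * T ^ (-(w : ℝ)⁻¹)
            * (1 + pnorm n w ξ τ) ^ (m + 1 - (∑ i, (β i : ℤ)) - (w : ℤ) * (k : ℤ)) :=
  stmt15_general n w hw2 U hU m hm q hq K hK hKU α β k
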